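/- Let φ: (M^m, g) → (N^{2m+1}, h, J, ξ, η) be a Legendrian isometric immersion into a Sasakian manifold and φ̄: (C(M), ḡ) → (C(N), h̄, I) the corresponding Lagrangian cone immersion. Then div_{ḡ}(I τ(φ̄)) = (1/r²) div_g(J τ(φ)). Consequently, φ is Legendrian minimal (i.e. div_g(J τ(φ)) = 0) if and only if φ̄ is Lagrangian minimal (i.e. div_{ḡ}(I τ(φ̄)) = 0). -/
import Mathlib


noncomputable section

open scoped BigOperators

/-! ### An algebraic (Koszul-style) model of Riemannian geometry

`Fn` plays the role of the ℝ-algebra `C^∞(M)` of smooth functions on a manifold `M`,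
`VF` plays the role of the `C^∞(M)`-module `Γ(TM)` of smooth vector fields.
A `RiemStr` packages the action of vector fields on functions (as derivations),
the Lie bracket, a Riemannian metric `g` and its Levi-Civita connection `conn`
(characterised by being torsion free and metric). -/
structure RiemStr (Fn VF : Type) [CommRing Fn] [Algebra ℝ Fn]
    [AddCommGroup VF] [Module Fn VF] where
  /-- the action `X f` of a vector field on a function -/
  deriv : VF → Fn → Fn
  deriv_add : ∀ X f₁ f₂, deriv X (f₁ + f₂) = deriv X f₁ + deriv X f₂
  deriv_mul : ∀ X f₁ f₂, deriv X (f₁ * f₂) = deriv X f₁ * f₂ + f₁ * deriv X f₂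
  deriv_addX : ∀ X Y f, deriv (X + Y) f = deriv X f + deriv Y f
  deriv_smulX : ∀ (f : Fn) (X : VF) (k : Fn), deriv (f • X) k = f * deriv X k
  /-- the Lie bracket of vector fields -/
  bracket : VF → VF → VF
  bracket_deriv : ∀ X Y f,
    deriv (bracket X Y) f = deriv X (deriv Y f) - deriv Y (deriv X f)
  /-- the Riemannian metric -/
  g : VF → VF → Fn
  g_symm : ∀ X Y, g X Y = g Y X
  g_addL : ∀ X Y Z, g (X + Y) Z = g X Z + g Y Z
  g_smulL : ∀ (f : Fn) (X Y : VF), g (f • X) Y = f * g X Y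
  /-- the Levi-Civita connection `∇` -/
  conn : VF → VF → VF
  conn_addL : ∀ X Y Z, conn (X + Y) Z = conn X Z + conn Y Z
  conn_smulL : ∀ (f : Fn) (X Y : VF), conn (f • X) Y = f • conn X Y
  conn_addR : ∀ X Y Z, conn X (Y + Z) = conn X Y + conn X Z
  conn_leibniz : ∀ (X : VF) (f : Fn) (Y : VF),
    conn X (f • Y) = deriv X f • Y + f • conn X Y
  /-- `∇` is torsion free -/
  torsion_free : ∀ X Y, conn X Y - conn Y X = bracket X Y
  /-- `∇` is a metric connection -/
  metric_compat : ∀ X Y Z, deriv X (g Y Z) = g (conn X Y) Z + g Y (conn X Z)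

namespace RiemStr

variable {Fn VF : Type} [CommRing Fn] [Algebra ℝ Fn] [AddCommGroup VF] [Module Fn VF]

/-- The Riemann curvature tensor `R(X,Y)Z = ∇_X∇_Y Z - ∇_Y∇_X Z - ∇_[X,Y] Z`. -/
def curv (S : RiemStr Fn VF) (X Y Z : VF) : VF :=
  S.conn X (S.conn Y Z) - S.conn Y (S.conn X Z) - S.conn (S.bracket X Y) Z

/-- `e` is an orthonormal frame (this also encodes `dim M = m`). -/
def IsONFrame (S : RiemStr Fn VF) {m : ℕ} (e : Fin m → VF) : Prop :=
  ∀ i j, S.g (e i) (e j) = if i = j then (1 : Fn) else 0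

/-- The (positive, geometer's) Laplacian on functions,
`Δ f = -∑ᵢ (eᵢ(eᵢ f) - (∇_{eᵢ}eᵢ) f)` w.r.t. an orthonormal frame `e`. -/
def lap (S : RiemStr Fn VF) {m : ℕ} (e : Fin m → VF) (f : Fn) : Fn :=
  -∑ i, (S.deriv (e i) (S.deriv (e i) f) - S.deriv (S.conn (e i) (e i)) f)

/-- The divergence of a vector field, `div X = ∑ᵢ g(eᵢ, ∇_{eᵢ} X)`. -/
def divergence (S : RiemStr Fn VF) {m : ℕ} (e : Fin m → VF) (X : VF) : Fn :=
  ∑ i, S.g (e i) (S.conn (e i) X)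

/-- The Ricci tensor `Ric(X,Y) = ∑ᵢ g(R(X,eᵢ)eᵢ, Y)` w.r.t. an orthonormal frame. -/
def ricci (S : RiemStr Fn VF) {m : ℕ} (e : Fin m → VF) (X Y : VF) : Fn :=
  ∑ i, S.g (S.curv X (e i) (e i)) Y

end RiemStr

/-! ### A smooth map `φ : (M,g) → (N,h)` together with its pull-back bundle `φ⁻¹TN`

`W` plays the role of the `C^∞(M)`-module `Γ(φ⁻¹TN)`, `pull` of `f ↦ f ∘ φ`,
`pullV` of `V ↦ V ∘ φ`, `dmap` of the differential `dφ`, `pconn` of the induced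
connection `∇̄` on `φ⁻¹TN`, `hW` of the metric `h` along `φ`, and `RW` of the
curvature tensor `R^N` of `(N,h)` along `φ`. -/
structure MapData (Fn VF Fn' VF' W : Type) [CommRing Fn] [Algebra ℝ Fn]
    [AddCommGroup VF] [Module Fn VF] [CommRing Fn'] [Algebra ℝ Fn']
    [AddCommGroup VF'] [Module Fn' VF'] [AddCommGroup W] [Module Fn W]
    (SM : RiemStr Fn VF) (SN : RiemStr Fn' VF') where
  pull : Fn' →+* Fn
  pull_algebraMap : ∀ r : ℝ, pull (algebraMap ℝ Fn' r) = algebraMap ℝ Fn r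
  pullV : VF' →+ W
  pullV_smul : ∀ (f : Fn') (V : VF'), pullV (f • V) = pull f • pullV V
  dmap : VF →+ W
  dmap_smul : ∀ (f : Fn) (X : VF), dmap (f • X) = f • dmap X
  pconn : VF → W → W
  pconn_addL : ∀ X Y V, pconn (X + Y) V = pconn X V + pconn Y V
  pconn_smulL : ∀ (f : Fn) (X : VF) (V : W), pconn (f • X) V = f • pconn X V
  pconn_addR : ∀ (X : VF) (V U : W), pconn X (V + U) = pconn X V + pconn X U
  pconn_leibniz : ∀ (X : VF) (f : Fn) (V : W),
    pconn X (f • V) = SM.deriv X f • V + f • pconn X V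
  pconn_sym : ∀ X Y, pconn X (dmap Y) - pconn Y (dmap X) = dmap (SM.bracket X Y)
  hW : W → W → Fn
  hW_symm : ∀ U V, hW U V = hW V U
  hW_addL : ∀ U V Z, hW (U + V) Z = hW U Z + hW V Z
  hW_smulL : ∀ (f : Fn) (U V : W), hW (f • U) V = f * hW U V
  hW_pull : ∀ U V, hW (pullV U) (pullV V) = pull (SN.g U V)
  hW_compat : ∀ (X : VF) (U V : W),
    SM.deriv X (hW U V) = hW (pconn X U) V + hW U (pconn X V)
  RW : W → W → W → W
  RW_pull : ∀ U V Z, RW (pullV U) (pullV V) (pullV Z) = pullV (SN.curv U V Z)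
  RW_addL : ∀ U U' V Z, RW (U + U') V Z = RW U V Z + RW U' V Z
  RW_addM : ∀ U V V' Z, RW U (V + V') Z = RW U V Z + RW U V' Z
  RW_addR : ∀ U V Z Z', RW U V (Z + Z') = RW U V Z + RW U V Z'
  RW_smulL : ∀ (f : Fn) (U V Z : W), RW (f • U) V Z = f • RW U V Z
  RW_smulM : ∀ (f : Fn) (U V Z : W), RW U (f • V) Z = f • RW U V Z
  RW_smulR : ∀ (f : Fn) (U V Z : W), RW U V (f • Z) = f • RW U V Z

namespace MapData

variable {Fn VF Fn' VF' W : Type} [CommRing Fn] [Algebra ℝ Fn]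
  [AddCommGroup VF] [Module Fn VF] [CommRing Fn'] [Algebra ℝ Fn']
  [AddCommGroup VF'] [Module Fn' VF'] [AddCommGroup W] [Module Fn W]
  {SM : RiemStr Fn VF} {SN : RiemStr Fn' VF'}

/-- The second fundamental form of the map,
`B(φ)(X,Y) = ∇̄_X (dφ Y) - dφ(∇_X Y)`. -/
def sff (D : MapData Fn VF Fn' VF' W SM SN) (X Y : VF) : W :=
  D.pconn X (D.dmap Y) - D.dmap (SM.conn X Y)

/-- The tension field `τ(φ) = ∑ᵢ B(φ)(eᵢ,eᵢ)` w.r.t. a frame `e`. -/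
def tension (D : MapData Fn VF Fn' VF' W SM SN) {m : ℕ} (e : Fin m → VF) : W :=
  ∑ i, D.sff (e i) (e i)

/-- The rough Laplacian `Δ̄ V = -∑ᵢ (∇̄_{eᵢ}∇̄_{eᵢ}V - ∇̄_{∇_{eᵢ}eᵢ}V)` on `Γ(φ⁻¹TN)`. -/
def roughLap (D : MapData Fn VF Fn' VF' W SM SN) {m : ℕ} (e : Fin m → VF) (V : W) : W :=
  -∑ i, (D.pconn (e i) (D.pconn (e i) V) - D.pconn (SM.conn (e i) (e i)) V)

/-- The Jacobi operator `J(V) = Δ̄ V - ∑ᵢ R^N(V, dφ eᵢ) dφ eᵢ`. -/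
def jacobi (D : MapData Fn VF Fn' VF' W SM SN) {m : ℕ} (e : Fin m → VF) (V : W) : W :=
  D.roughLap e V - ∑ i, D.RW V (D.dmap (e i)) (D.dmap (e i))

/-- The bitension field `τ₂(φ) = J(τ(φ))`. -/
def bitension (D : MapData Fn VF Fn' VF' W SM SN) {m : ℕ} (e : Fin m → VF) : W :=
  D.jacobi e (D.tension e)

end MapData

/-! ### Isometric immersions -/

/-- Data of an isometric immersion `φ : (M,g) → (N,h)`: a `MapData` which is isometric,
together with the (pointwise orthogonal) projection `tanPr : φ⁻¹TN → TM` onto the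
tangent bundle of `M`. -/
structure ImmersionData (Fn VF Fn' VF' W : Type) [CommRing Fn] [Algebra ℝ Fn]
    [AddCommGroup VF] [Module Fn VF] [CommRing Fn'] [Algebra ℝ Fn']
    [AddCommGroup VF'] [Module Fn' VF'] [AddCommGroup W] [Module Fn W]
    (SM : RiemStr Fn VF) (SN : RiemStr Fn' VF') extends
      MapData Fn VF Fn' VF' W SM SN where
  isometric : ∀ X Y, hW (dmap X) (dmap Y) = SM.g X Y
  dmap_inj : Function.Injective dmap
  tanPr : W →+ VF
  tanPr_smul : ∀ (f : Fn) (V : W), tanPr (f • V) = f • tanPr V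
  tanPr_dmap : ∀ X, tanPr (dmap X) = X
  tanPr_char : ∀ (V : W) (X : VF), SM.g (tanPr V) X = hW V (dmap X)

namespace ImmersionData

variable {Fn VF Fn' VF' W : Type} [CommRing Fn] [Algebra ℝ Fn]
  [AddCommGroup VF] [Module Fn VF] [CommRing Fn'] [Algebra ℝ Fn']
  [AddCommGroup VF'] [Module Fn' VF'] [AddCommGroup W] [Module Fn W]
  {SM : RiemStr Fn VF} {SN : RiemStr Fn' VF'}

/-- The component of a section of `φ⁻¹TN` normal to the submanifold. -/
def perp (D : ImmersionData Fn VF Fn' VF' W SM SN) (V : W) : W :=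
  V - D.dmap (D.tanPr V)

/-- The shape operator `A_ζ X = -(∇̄_X ζ)^T` of a normal field `ζ`. -/
def shape (D : ImmersionData Fn VF Fn' VF' W SM SN) (ζ : W) (X : VF) : VF :=
  -D.tanPr (D.pconn X ζ)

/-- The normal connection `∇^⊥_X ζ = (∇̄_X ζ)^⊥`. -/
def nconn (D : ImmersionData Fn VF Fn' VF' W SM SN) (X : VF) (ζ : W) : W :=
  D.perp (D.pconn X ζ)

/-- The rough Laplacian `Δ^⊥` of the normal connection. -/
def nlap (D : ImmersionData Fn VF Fn' VF' W SM SN) {m : ℕ} (e : Fin m → VF) (ζ : W) : W :=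
  -∑ i, (D.nconn (e i) (D.nconn (e i) ζ) - D.nconn (SM.conn (e i) (e i)) ζ)

/-- The covariant derivative `(∇_X A_ζ)(Y) = ∇_X (A_ζ Y) - A_ζ(∇_X Y)` of the
shape operator (`ζ` fixed). -/
def covShape (D : ImmersionData Fn VF Fn' VF' W SM SN) (X : VF) (ζ : W) (Y : VF) : VF :=
  SM.conn X (D.shape ζ Y) - D.shape ζ (SM.conn X Y)

/-- The covariant derivative `(∇^⊥_X B)(Y,Z)` of the second fundamental form. -/
def covSff (D : ImmersionData Fn VF Fn' VF' W SM SN) (X Y Z : VF) : W :=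
  D.nconn X (D.toMapData.sff Y Z) - D.toMapData.sff (SM.conn X Y) Z
    - D.toMapData.sff Y (SM.conn X Z)

/-- The mean curvature vector field `H = (1/m) ∑ᵢ B(eᵢ,eᵢ) = (1/m) τ(φ)`. -/
def meanCurv (D : ImmersionData Fn VF Fn' VF' W SM SN) {m : ℕ} (e : Fin m → VF) : W :=
  algebraMap ℝ Fn ((m : ℝ)⁻¹) • D.toMapData.tension e

end ImmersionData

/-! ### Sasakian structures -/

/-- A Sasakian structure `(J, ξ, η)` on a Riemannian manifold `(N,h)` (modelled by `SN`):
a contact metric structure whose cone is Kähler, characterised by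
`(∇^N_X J)(Y) = h(X,Y) ξ - η(Y) X`. -/
structure SasakiStr (Fn' VF' : Type) [CommRing Fn'] [Algebra ℝ Fn']
    [AddCommGroup VF'] [Module Fn' VF'] (SN : RiemStr Fn' VF') where
  J : VF' →+ VF'
  J_smul : ∀ (f : Fn') (X : VF'), J (f • X) = f • J X
  xi : VF'
  eta : VF' →+ Fn'
  eta_smul : ∀ (f : Fn') (X : VF'), eta (f • X) = f * eta X
  J_sq : ∀ X, J (J X) = -X + eta X • xi
  eta_xi : eta xi = 1
  J_xi : J xi = 0
  eta_J : ∀ X, eta (J X) = 0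
  g_J : ∀ X Y, SN.g (J X) (J Y) = SN.g X Y - eta X * eta Y
  eta_eq_g : ∀ X, eta X = SN.g X xi
  sasaki : ∀ X Y, SN.conn X (J Y) - J (SN.conn X Y) = SN.g X Y • xi - eta Y • X

/-- The Sasakian structure of `N` transported along a map `φ : M → N` to the
pull-back bundle `φ⁻¹TN` (modelled by `W`). -/
structure SasakiAlong (Fn VF Fn' VF' W : Type) [CommRing Fn] [Algebra ℝ Fn]
    [AddCommGroup VF] [Module Fn VF] [CommRing Fn'] [Algebra ℝ Fn']
    [AddCommGroup VF'] [Module Fn' VF'] [AddCommGroup W] [Module Fn W]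
    {SM : RiemStr Fn VF} {SN : RiemStr Fn' VF'}
    (D : MapData Fn VF Fn' VF' W SM SN) (SS : SasakiStr Fn' VF' SN) where
  Jw : W →+ W
  Jw_smul : ∀ (f : Fn) (V : W), Jw (f • V) = f • Jw V
  Jw_pull : ∀ V', Jw (D.pullV V') = D.pullV (SS.J V')
  etaW : W →+ Fn
  etaW_smul : ∀ (f : Fn) (V : W), etaW (f • V) = f * etaW V
  etaW_pull : ∀ V', etaW (D.pullV V') = D.pull (SS.eta V')
  Jw_sq : ∀ V, Jw (Jw V) = -V + etaW V • D.pullV SS.xi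
  etaW_Jw : ∀ V, etaW (Jw V) = 0
  hW_Jw : ∀ U V, D.hW (Jw U) (Jw V) = D.hW U V - etaW U * etaW V
  etaW_eq_hW : ∀ V, etaW V = D.hW V (D.pullV SS.xi)
  Jw_parallel : ∀ (X : VF) (V : W), D.pconn X (Jw V) - Jw (D.pconn X V)
      = D.hW (D.dmap X) V • D.pullV SS.xi - etaW V • D.dmap X

namespace SasakiAlong

variable {Fn VF Fn' VF' W : Type} [CommRing Fn] [Algebra ℝ Fn]
  [AddCommGroup VF] [Module Fn VF] [CommRing Fn'] [Algebra ℝ Fn']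
  [AddCommGroup VF'] [Module Fn' VF'] [AddCommGroup W] [Module Fn W]
  {SM : RiemStr Fn VF} {SN : RiemStr Fn' VF'}
  {D : MapData Fn VF Fn' VF' W SM SN} {SS : SasakiStr Fn' VF' SN}

/-- The map `φ` is Legendrian: `φ*η ≡ 0`. -/
def IsLegendrian (SA : SasakiAlong Fn VF Fn' VF' W D SS) : Prop :=
  ∀ X : VF, SA.etaW (D.dmap X) = 0

end SasakiAlong

/-! ### The Riemannian cone of a manifold

The cone `C(M) = M × ℝ⁺` with the cone metric `ḡ = dr² + r² g`.  `FnC`, `VFC`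
model `C^∞(C(M))` and `Γ(T C(M))`, `SC` its Riemannian structure, `lift`/`liftV`
the canonical lifts of functions/vector fields, `rr` the radial coordinate `r`
(a unit, with inverse `rinv`), `dr` the radial vector field `∂/∂r`. -/
structure ConeData (Fn VF FnC VFC : Type) [CommRing Fn] [Algebra ℝ Fn]
    [AddCommGroup VF] [Module Fn VF] [CommRing FnC] [Algebra ℝ FnC]
    [AddCommGroup VFC] [Module FnC VFC]
    (SM : RiemStr Fn VF) (SC : RiemStr FnC VFC) where
  lift : Fn →+* FnC
  lift_inj : Function.Injective lift
  liftV : VF →+ VFC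
  liftV_smul : ∀ (f : Fn) (X : VF), liftV (f • X) = lift f • liftV X
  rr : FnC
  rinv : FnC
  rr_rinv : rr * rinv = 1
  dr : VFC
  metric_lift : ∀ X Y, SC.g (liftV X) (liftV Y) = rr * rr * lift (SM.g X Y)
  metric_dr_lift : ∀ X, SC.g dr (liftV X) = 0
  metric_dr_dr : SC.g dr dr = 1
  deriv_lift : ∀ X f, SC.deriv (liftV X) (lift f) = lift (SM.deriv X f)
  deriv_dr_lift : ∀ f, SC.deriv dr (lift f) = 0
  deriv_lift_rr : ∀ X, SC.deriv (liftV X) rr = 0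
  deriv_dr_rr : SC.deriv dr rr = 1
  bracket_lift : ∀ X Y, SC.bracket (liftV X) (liftV Y) = liftV (SM.bracket X Y)
  bracket_dr_lift : ∀ X, SC.bracket dr (liftV X) = 0
  /-- the metric of the cone is nondegenerate -/
  nondeg : ∀ Z : VFC, (∀ X, SC.g Z (liftV X) = 0) → SC.g Z dr = 0 → Z = 0
  /-- vector fields on the cone are generated by lifted fields and `∂/∂r` -/
  span : ∀ Z : VFC, ∃ (k : ℕ) (a : Fin k → FnC) (X : Fin k → VF) (b : FnC),
    Z = (∑ i, a i • liftV (X i)) + b • dr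

namespace ConeData

variable {Fn VF FnC VFC : Type} [CommRing Fn] [Algebra ℝ Fn]
  [AddCommGroup VF] [Module Fn VF] [CommRing FnC] [Algebra ℝ FnC]
  [AddCommGroup VFC] [Module FnC VFC]
  {SM : RiemStr Fn VF} {SC : RiemStr FnC VFC}

/-- The orthonormal frame `ēᵢ = (1/r) eᵢ` of the cone associated with an
orthonormal frame `e` of `M` (to be completed by `ē_{m+1} = ∂/∂r`). -/
def coneFrame (CM : ConeData Fn VF FnC VFC SM SC) {m : ℕ} (e : Fin m → VF) :
    Fin m → VFC :=
  fun i => CM.rinv • CM.liftV (e i)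

end ConeData

/-! ### The cone `φ̄ : C(M) → C(N)` of a map `φ : M → N`, with its pull-back
bundle `φ̄⁻¹TC(N)` (modelled by `Wc`).

A section of `φ̄⁻¹TC(N)` decomposes as `W = V + B ∂/∂r`; `emb` embeds
(`r`-independent) sections `V` of `φ⁻¹TN`, `drsec` is the radial section
`∂/∂r` along `φ̄`, `dmapC` is `dφ̄`, `pconnC` the induced connection, `hWc` the
cone metric `h̄ = dr² + r²h` along `φ̄`, and `RWc` the curvature of `C(N)` along `φ̄`. -/
structure ConeMapData (Fn VF Fn' VF' W FnC VFC Wc : Type) [CommRing Fn] [Algebra ℝ Fn]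
    [AddCommGroup VF] [Module Fn VF] [CommRing Fn'] [Algebra ℝ Fn']
    [AddCommGroup VF'] [Module Fn' VF'] [AddCommGroup W] [Module Fn W]
    [CommRing FnC] [Algebra ℝ FnC] [AddCommGroup VFC] [Module FnC VFC]
    [AddCommGroup Wc] [Module FnC Wc]
    (SM : RiemStr Fn VF) (SN : RiemStr Fn' VF') (SC : RiemStr FnC VFC)
    (D : MapData Fn VF Fn' VF' W SM SN)
    (CM : ConeData Fn VF FnC VFC SM SC) where
  emb : W →+ Wc
  emb_smul : ∀ (f : Fn) (V : W), emb (f • V) = CM.lift f • emb V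
  emb_inj : Function.Injective emb
  drsec : Wc
  dmapC : VFC →+ Wc
  dmapC_smul : ∀ (f : FnC) (Z : VFC), dmapC (f • Z) = f • dmapC Z
  dmapC_lift : ∀ X, dmapC (CM.liftV X) = emb (D.dmap X)
  dmapC_dr : dmapC CM.dr = drsec
  pconnC : VFC → Wc → Wc
  pconnC_addL : ∀ Z Z' U, pconnC (Z + Z') U = pconnC Z U + pconnC Z' U
  pconnC_smulL : ∀ (f : FnC) (Z : VFC) (U : Wc), pconnC (f • Z) U = f • pconnC Z U
  pconnC_addR : ∀ (Z : VFC) (U U' : Wc), pconnC Z (U + U') = pconnC Z U + pconnC Z U'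
  pconnC_leibniz : ∀ (Z : VFC) (f : FnC) (U : Wc),
    pconnC Z (f • U) = SC.deriv Z f • U + f • pconnC Z U
  pconnC_lift_emb : ∀ (X : VF) (V : W),
    pconnC (CM.liftV X) (emb V) = emb (D.pconn X V)
  pconnC_lift_dr : ∀ X : VF,
    pconnC (CM.liftV X) drsec = CM.rinv • emb (D.dmap X)
  pconnC_dr_emb : ∀ V : W, pconnC CM.dr (emb V) = 0
  pconnC_dr_dr : pconnC CM.dr drsec = 0
  hWc : Wc → Wc → FnC
  hWc_symm : ∀ U V, hWc U V = hWc V U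
  hWc_addL : ∀ U V Z, hWc (U + V) Z = hWc U Z + hWc V Z
  hWc_smulL : ∀ (f : FnC) (U V : Wc), hWc (f • U) V = f * hWc U V
  hWc_emb : ∀ U V, hWc (emb U) (emb V) = CM.rr * CM.rr * CM.lift (D.hW U V)
  hWc_emb_dr : ∀ U, hWc (emb U) drsec = 0
  hWc_dr_dr : hWc drsec drsec = 1
  RWc : Wc → Wc → Wc → Wc
  RWc_addL : ∀ U U' V Z, RWc (U + U') V Z = RWc U V Z + RWc U' V Z
  RWc_addM : ∀ U V V' Z, RWc U (V + V') Z = RWc U V Z + RWc U V' Z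
  RWc_addR : ∀ U V Z Z', RWc U V (Z + Z') = RWc U V Z + RWc U V Z'
  RWc_smulL : ∀ (f : FnC) (U V Z : Wc), RWc (f • U) V Z = f • RWc U V Z
  RWc_smulM : ∀ (f : FnC) (U V Z : Wc), RWc U (f • V) Z = f • RWc U V Z
  RWc_smulR : ∀ (f : FnC) (U V Z : Wc), RWc U V (f • Z) = f • RWc U V Z
  RWc_emb : ∀ U V Z, RWc (emb U) (emb V) (emb Z)
      = emb (D.RW U V Z) - CM.lift (D.hW V Z) • emb U + CM.lift (D.hW U Z) • emb V
  RWc_drL : ∀ V Z, RWc drsec V Z = 0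
  RWc_drM : ∀ U Z, RWc U drsec Z = 0
  RWc_drR : ∀ U V, RWc U V drsec = 0
  /-- linear independence of the powers of `r` over `r`-independent sections -/
  rpow_indep : ∀ x y : W, emb x + (CM.rr * CM.rr) • emb y = 0 → x = 0 ∧ y = 0

namespace ConeMapData

variable {Fn VF Fn' VF' W FnC VFC Wc : Type} [CommRing Fn] [Algebra ℝ Fn]
  [AddCommGroup VF] [Module Fn VF] [CommRing Fn'] [Algebra ℝ Fn']
  [AddCommGroup VF'] [Module Fn' VF'] [AddCommGroup W] [Module Fn W]
  [CommRing FnC] [Algebra ℝ FnC] [AddCommGroup VFC] [Module FnC VFC]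
  [AddCommGroup Wc] [Module FnC Wc]
  {SM : RiemStr Fn VF} {SN : RiemStr Fn' VF'} {SC : RiemStr FnC VFC}
  {D : MapData Fn VF Fn' VF' W SM SN} {CM : ConeData Fn VF FnC VFC SM SC}

/-- The tension field `τ(φ̄)` of the cone map `φ̄ : (C(M),ḡ) → (C(N),h̄)`, computed
with the orthonormal frame `ē₁,…,ē_m, ∂/∂r` of the cone. -/
def tensionC (C : ConeMapData Fn VF Fn' VF' W FnC VFC Wc SM SN SC D CM)
    {m : ℕ} (e : Fin m → VF) : Wc :=
  (∑ i, (C.pconnC (CM.coneFrame e i) (C.dmapC (CM.coneFrame e i))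
      - C.dmapC (SC.conn (CM.coneFrame e i) (CM.coneFrame e i))))
  + (C.pconnC CM.dr (C.dmapC CM.dr) - C.dmapC (SC.conn CM.dr CM.dr))

/-- The rough Laplacian `Δ̄̄` on `Γ(φ̄⁻¹TC(N))`. -/
def roughLapC (C : ConeMapData Fn VF Fn' VF' W FnC VFC Wc SM SN SC D CM)
    {m : ℕ} (e : Fin m → VF) (U : Wc) : Wc :=
  -((∑ i, (C.pconnC (CM.coneFrame e i) (C.pconnC (CM.coneFrame e i) U)
      - C.pconnC (SC.conn (CM.coneFrame e i) (CM.coneFrame e i)) U))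
    + (C.pconnC CM.dr (C.pconnC CM.dr U) - C.pconnC (SC.conn CM.dr CM.dr) U))

/-- The Jacobi operator `J_{φ̄}` of the cone map. -/
def jacobiC (C : ConeMapData Fn VF Fn' VF' W FnC VFC Wc SM SN SC D CM)
    {m : ℕ} (e : Fin m → VF) (U : Wc) : Wc :=
  C.roughLapC e U
    - ((∑ i, C.RWc U (C.dmapC (CM.coneFrame e i)) (C.dmapC (CM.coneFrame e i)))
      + C.RWc U (C.dmapC CM.dr) (C.dmapC CM.dr))

/-- The bitension field `τ₂(φ̄) = J_{φ̄}(τ(φ̄))` of the cone map. -/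
def bitensionC (C : ConeMapData Fn VF Fn' VF' W FnC VFC Wc SM SN SC D CM)
    {m : ℕ} (e : Fin m → VF) : Wc :=
  C.jacobiC e (C.tensionC e)

end ConeMapData

/-! ### The Kähler (almost complex) structure `I` of the cone `C(N)` of a Sasakian
manifold, transported along the cone map `φ̄`:
`I Y = J Y + η(Y) Ψ` for `Y` tangent to `N`, and `I Ψ = -ξ`, where `Ψ = r ∂/∂r`. -/
structure KaehlerConeAlong (Fn VF Fn' VF' W FnC VFC Wc : Type) [CommRing Fn] [Algebra ℝ Fn]
    [AddCommGroup VF] [Module Fn VF] [CommRing Fn'] [Algebra ℝ Fn']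
    [AddCommGroup VF'] [Module Fn' VF'] [AddCommGroup W] [Module Fn W]
    [CommRing FnC] [Algebra ℝ FnC] [AddCommGroup VFC] [Module FnC VFC]
    [AddCommGroup Wc] [Module FnC Wc]
    {SM : RiemStr Fn VF} {SN : RiemStr Fn' VF'} {SC : RiemStr FnC VFC}
    {D : MapData Fn VF Fn' VF' W SM SN} {CM : ConeData Fn VF FnC VFC SM SC}
    (C : ConeMapData Fn VF Fn' VF' W FnC VFC Wc SM SN SC D CM)
    (SS : SasakiStr Fn' VF' SN) (SA : SasakiAlong Fn VF Fn' VF' W D SS) where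
  Iw : Wc →+ Wc
  Iw_smul : ∀ (f : FnC) (U : Wc), Iw (f • U) = f • Iw U
  Iw_emb : ∀ V : W,
    Iw (C.emb V) = C.emb (SA.Jw V) + (CM.rr * CM.lift (SA.etaW V)) • C.drsec
  Iw_dr : Iw C.drsec = -(CM.rinv • C.emb (D.pullV SS.xi))

namespace ConeData

variable {Fn VF FnC VFC : Type} [CommRing Fn] [Algebra ℝ Fn]
  [AddCommGroup VF] [Module Fn VF] [CommRing FnC] [Algebra ℝ FnC]
  [AddCommGroup VFC] [Module FnC VFC]
  {SM : RiemStr Fn VF} {SC : RiemStr FnC VFC}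

/-- The divergence on the cone `C(M)` w.r.t. the frame `ē₁,…,ē_m, ∂/∂r`. -/
def coneDiv (CM : ConeData Fn VF FnC VFC SM SC) {m : ℕ} (e : Fin m → VF)
    (Z : VFC) : FnC :=
  (∑ i, SC.g (CM.coneFrame e i) (SC.conn (CM.coneFrame e i) Z))
    + SC.g CM.dr (SC.conn CM.dr Z)

end ConeData

/-- The cone of an isometric immersion: a `ConeMapData` together with the
orthogonal projection `tanPrC : φ̄⁻¹TC(N) → TC(M)`. -/
structure ConeImmersionData (Fn VF Fn' VF' W FnC VFC Wc : Type) [CommRing Fn] [Algebra ℝ Fn]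
    [AddCommGroup VF] [Module Fn VF] [CommRing Fn'] [Algebra ℝ Fn']
    [AddCommGroup VF'] [Module Fn' VF'] [AddCommGroup W] [Module Fn W]
    [CommRing FnC] [Algebra ℝ FnC] [AddCommGroup VFC] [Module FnC VFC]
    [AddCommGroup Wc] [Module FnC Wc]
    (SM : RiemStr Fn VF) (SN : RiemStr Fn' VF') (SC : RiemStr FnC VFC)
    (D : MapData Fn VF Fn' VF' W SM SN)
    (CM : ConeData Fn VF FnC VFC SM SC) extends
      ConeMapData Fn VF Fn' VF' W FnC VFC Wc SM SN SC D CM where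
  tanPrC : Wc →+ VFC
  tanPrC_smul : ∀ (f : FnC) (U : Wc), tanPrC (f • U) = f • tanPrC U
  tanPrC_dmap : ∀ Z : VFC, tanPrC (dmapC Z) = Z
  tanPrC_char : ∀ (U : Wc) (Z : VFC), SC.g (tanPrC U) Z = hWc U (dmapC Z)

namespace ConeImmersionData

variable {Fn VF Fn' VF' W FnC VFC Wc : Type} [CommRing Fn] [Algebra ℝ Fn]
  [AddCommGroup VF] [Module Fn VF] [CommRing Fn'] [Algebra ℝ Fn']
  [AddCommGroup VF'] [Module Fn' VF'] [AddCommGroup W] [Module Fn W]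
  [CommRing FnC] [Algebra ℝ FnC] [AddCommGroup VFC] [Module FnC VFC]
  [AddCommGroup Wc] [Module FnC Wc]
  {SM : RiemStr Fn VF} {SN : RiemStr Fn' VF'} {SC : RiemStr FnC VFC}
  {D : MapData Fn VF Fn' VF' W SM SN} {CM : ConeData Fn VF FnC VFC SM SC}

/-- The component of a section of `φ̄⁻¹TC(N)` normal to the cone submanifold `C(M)`. -/
def perpC (C : ConeImmersionData Fn VF Fn' VF' W FnC VFC Wc SM SN SC D CM)
    (U : Wc) : Wc :=
  U - C.dmapC (C.tanPrC U)

end ConeImmersionData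

/-! ### Auxiliary lemmas -/

section RingAux

variable {R : Type} [CommRing R] [Algebra ℝ R]

lemma half_cancel {a : R} (h : a + a = 0) : a = 0 := by
  have h1 : (algebraMap ℝ R (1/2)) * (algebraMap ℝ R 2) = 1 := by
    rw [← map_mul]; norm_num
  calc a = ((algebraMap ℝ R (1/2)) * (algebraMap ℝ R 2)) * a := by rw [h1, one_mul]
    _ = (algebraMap ℝ R (1/2)) * ((algebraMap ℝ R 2) * a) := by ring
    _ = (algebraMap ℝ R (1/2)) * (a + a) := by rw [map_ofNat, two_mul]
    _ = 0 := by rw [h, mul_zero]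

lemma two_mul_cancel {a b : R} (h : 2 * a = 2 * b) : a = b := by
  have : (a - b) + (a - b) = 0 := by linear_combination h
  have := half_cancel this
  exact sub_eq_zero.mp this

end RingAux
namespace RiemStr

variable {A V : Type} [CommRing A] [Algebra ℝ A] [AddCommGroup V] [Module A V]
variable (S : RiemStr A V)

lemma deriv_zero (X : V) : S.deriv X 0 = 0 := by
  have h := S.deriv_add X 0 0
  rw [add_zero] at h
  exact (left_eq_add.mp h)

lemma deriv_one (X : V) : S.deriv X 1 = 0 := by
  have h := S.deriv_mul X 1 1
  rw [one_mul, mul_one, one_mul] at h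
  exact (left_eq_add.mp h)

lemma deriv_sub (X : V) (a b : A) : S.deriv X (a - b) = S.deriv X a - S.deriv X b := by
  have h := S.deriv_add X (a - b) b
  rw [sub_add_cancel] at h
  exact eq_sub_of_add_eq h.symm

lemma g_zeroL (Z : V) : S.g 0 Z = 0 := by
  have h := S.g_addL 0 0 Z
  rw [add_zero] at h
  exact (left_eq_add.mp h)

lemma g_zeroR (Z : V) : S.g Z 0 = 0 := by rw [S.g_symm]; exact S.g_zeroL Z

lemma g_addR (X Y Z : V) : S.g X (Y + Z) = S.g X Y + S.g X Z := by
  rw [S.g_symm, S.g_addL, S.g_symm Y X, S.g_symm Z X]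

lemma g_subL (X Y Z : V) : S.g (X - Y) Z = S.g X Z - S.g Y Z := by
  have h := S.g_addL (X - Y) Y Z
  rw [sub_add_cancel] at h
  exact eq_sub_of_add_eq h.symm

lemma g_subR (X Y Z : V) : S.g X (Y - Z) = S.g X Y - S.g X Z := by
  rw [S.g_symm, S.g_subL, S.g_symm Y X, S.g_symm Z X]

lemma g_smulR (f : A) (X Y : V) : S.g X (f • Y) = f * S.g X Y := by
  rw [S.g_symm, S.g_smulL, S.g_symm Y X]

lemma g_negR (X Y : V) : S.g X (-Y) = -S.g X Y := by
  have h := S.g_subR X 0 Y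
  rw [zero_sub, S.g_zeroR, zero_sub] at h
  exact h

lemma conn_zeroR (X : V) : S.conn X 0 = 0 := by
  have h := S.conn_addR X 0 0
  rw [add_zero] at h
  exact (left_eq_add.mp h)

lemma conn_subR (X Y Z : V) : S.conn X (Y - Z) = S.conn X Y - S.conn X Z := by
  have h := S.conn_addR X (Y - Z) Z
  rw [sub_add_cancel] at h
  exact eq_sub_of_add_eq h.symm

lemma bracket_self (X : V) : S.bracket X X = 0 := by
  have h := S.torsion_free X X
  rw [sub_self] at h
  exact h.symm

lemma bracket_comm (X Y : V) : S.bracket Y X = -S.bracket X Y := by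
  rw [← S.torsion_free, ← S.torsion_free, neg_sub]

lemma koszul (X Y Z : V) :
    (2 : A) * S.g (S.conn X Y) Z
      = S.deriv X (S.g Y Z) + S.deriv Y (S.g Z X) - S.deriv Z (S.g X Y)
        + S.g (S.bracket X Y) Z - S.g (S.bracket Y Z) X + S.g (S.bracket Z X) Y := by
  rw [← S.torsion_free X Y, ← S.torsion_free Y Z, ← S.torsion_free Z X,
      S.g_subL, S.g_subL, S.g_subL,
      S.metric_compat X Y Z, S.metric_compat Y Z X, S.metric_compat Z X Y,
      S.g_symm Y (S.conn X Z), S.g_symm Z (S.conn Y X), S.g_symm X (S.conn Z Y)]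
  ring

end RiemStr
namespace ConeData

variable {Fn VF FnC VFC : Type} [CommRing Fn] [Algebra ℝ Fn]
  [AddCommGroup VF] [Module Fn VF] [CommRing FnC] [Algebra ℝ FnC]
  [AddCommGroup VFC] [Module FnC VFC]
  {SM : RiemStr Fn VF} {SC : RiemStr FnC VFC}
variable (CM : ConeData Fn VF FnC VFC SM SC)

lemma rinv_rr : CM.rinv * CM.rr = 1 := by rw [mul_comm]; exact CM.rr_rinv

lemma g_lift_dr (X : VF) : SC.g (CM.liftV X) CM.dr = 0 := by
  rw [SC.g_symm]; exact CM.metric_dr_lift X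

lemma deriv_liftV_rinv (X : VF) : SC.deriv (CM.liftV X) CM.rinv = 0 := by
  have h1 : SC.deriv (CM.liftV X) (CM.rr * CM.rinv) = 0 := by
    rw [CM.rr_rinv]; exact SC.deriv_one _
  rw [SC.deriv_mul, CM.deriv_lift_rr, zero_mul, zero_add] at h1
  calc SC.deriv (CM.liftV X) CM.rinv
      = (CM.rinv * CM.rr) * SC.deriv (CM.liftV X) CM.rinv := by rw [CM.rinv_rr, one_mul]
    _ = CM.rinv * (CM.rr * SC.deriv (CM.liftV X) CM.rinv) := by ring
    _ = 0 := by rw [h1, mul_zero]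

lemma deriv_dr_rinv : SC.deriv CM.dr CM.rinv = -(CM.rinv * CM.rinv) := by
  have h1 : SC.deriv CM.dr (CM.rr * CM.rinv) = 0 := by
    rw [CM.rr_rinv]; exact SC.deriv_one _
  rw [SC.deriv_mul, CM.deriv_dr_rr, one_mul] at h1
  have h2 : CM.rr * SC.deriv CM.dr CM.rinv = -CM.rinv := by linear_combination h1
  calc SC.deriv CM.dr CM.rinv
      = (CM.rinv * CM.rr) * SC.deriv CM.dr CM.rinv := by rw [CM.rinv_rr, one_mul]
    _ = CM.rinv * (CM.rr * SC.deriv CM.dr CM.rinv) := by ring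
    _ = CM.rinv * (-CM.rinv) := by rw [h2]
    _ = -(CM.rinv * CM.rinv) := by ring

lemma eq_of_g {A B : VFC} (h1 : ∀ X, SC.g A (CM.liftV X) = SC.g B (CM.liftV X))
    (h2 : SC.g A CM.dr = SC.g B CM.dr) : A = B := by
  have h := CM.nondeg (A - B)
    (fun X => by rw [SC.g_subL, h1 X, sub_self])
    (by rw [SC.g_subL, h2, sub_self])
  exact sub_eq_zero.mp h

lemma deriv_liftV_rr2f (X : VF) (f : Fn) :
    SC.deriv (CM.liftV X) (CM.rr * CM.rr * CM.lift f)
      = CM.rr * CM.rr * CM.lift (SM.deriv X f) := by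
  rw [SC.deriv_mul, SC.deriv_mul, CM.deriv_lift_rr, CM.deriv_lift]; ring

lemma deriv_dr_rr2f (f : Fn) :
    SC.deriv CM.dr (CM.rr * CM.rr * CM.lift f) = 2 * (CM.rr * CM.lift f) := by
  rw [SC.deriv_mul, SC.deriv_mul, CM.deriv_dr_rr, CM.deriv_dr_lift]; ring

lemma conn_dr_dr : SC.conn CM.dr CM.dr = 0 := by
  apply CM.eq_of_g
  · intro X
    apply two_mul_cancel
    rw [SC.koszul]
    simp [CM.metric_dr_lift, CM.g_lift_dr, CM.bracket_dr_lift, SC.bracket_self,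
      SC.bracket_comm, CM.metric_dr_dr, SC.deriv_one, SC.deriv_zero, SC.g_zeroL,
      SC.g_zeroR]
  · apply two_mul_cancel
    rw [SC.koszul]
    simp [CM.metric_dr_dr, SC.deriv_one, SC.bracket_self, SC.g_zeroL]

lemma conn_dr_lift (X : VF) : SC.conn CM.dr (CM.liftV X) = CM.rinv • CM.liftV X := by
  apply CM.eq_of_g
  · intro Z
    apply two_mul_cancel
    rw [SC.koszul, SC.g_smulL]
    rw [CM.metric_lift, CM.g_lift_dr, CM.metric_dr_lift, CM.bracket_dr_lift,
        CM.bracket_lift, SC.bracket_comm, CM.bracket_dr_lift,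
        SC.deriv_zero, SC.deriv_zero, SC.g_zeroL, CM.g_lift_dr, neg_zero, SC.g_zeroL,
        CM.deriv_dr_rr2f]
    linear_combination (-2 * (CM.rr * CM.lift (SM.g X Z))) * CM.rr_rinv
  · apply two_mul_cancel
    rw [SC.koszul, SC.g_smulL, CM.g_lift_dr]
    simp [CM.g_lift_dr, CM.metric_dr_lift, CM.metric_dr_dr, SC.bracket_self,
      CM.bracket_dr_lift, SC.bracket_comm, SC.deriv_zero, SC.deriv_one, SC.g_zeroL]

lemma conn_lift_dr (X : VF) : SC.conn (CM.liftV X) CM.dr = CM.rinv • CM.liftV X := by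
  have h := SC.torsion_free CM.dr (CM.liftV X)
  rw [CM.bracket_dr_lift] at h
  have h2 : SC.conn CM.dr (CM.liftV X) = SC.conn (CM.liftV X) CM.dr := sub_eq_zero.mp h
  rw [← h2, CM.conn_dr_lift]

lemma conn_lift_lift (X Y : VF) :
    SC.conn (CM.liftV X) (CM.liftV Y)
      = CM.liftV (SM.conn X Y) - (CM.rr * CM.lift (SM.g X Y)) • CM.dr := by
  apply CM.eq_of_g
  · intro Z
    apply two_mul_cancel
    have hkM := congrArg CM.lift (SM.koszul X Y Z)
    simp only [map_add, map_sub, map_mul, map_ofNat] at hkM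
    rw [SC.koszul, CM.metric_lift Y Z, CM.metric_lift Z X, CM.metric_lift X Y,
        CM.deriv_liftV_rr2f, CM.deriv_liftV_rr2f, CM.deriv_liftV_rr2f,
        CM.bracket_lift, CM.bracket_lift, CM.bracket_lift,
        CM.metric_lift, CM.metric_lift, CM.metric_lift,
        SC.g_subL, SC.g_smulL, CM.metric_lift, CM.metric_dr_lift]
    linear_combination (-CM.rr * CM.rr) * hkM
  · apply two_mul_cancel
    rw [SC.koszul, SC.g_subL, SC.g_smulL, CM.g_lift_dr (SM.conn X Y), CM.metric_dr_dr,
        CM.g_lift_dr Y, SC.deriv_zero (CM.liftV X),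
        CM.metric_dr_lift X, SC.deriv_zero (CM.liftV Y),
        CM.metric_lift X Y, CM.deriv_dr_rr2f,
        CM.bracket_lift X Y, CM.g_lift_dr (SM.bracket X Y),
        SC.bracket_comm CM.dr (CM.liftV Y), CM.bracket_dr_lift Y, neg_zero,
        SC.g_zeroL (CM.liftV X), CM.bracket_dr_lift X, SC.g_zeroL (CM.liftV Y)]
    ring

end ConeData
namespace MapData

variable {Fn VF Fn' VF' W : Type} [CommRing Fn] [Algebra ℝ Fn]
  [AddCommGroup VF] [Module Fn VF] [CommRing Fn'] [Algebra ℝ Fn']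
  [AddCommGroup VF'] [Module Fn' VF'] [AddCommGroup W] [Module Fn W]
  {SM : RiemStr Fn VF} {SN : RiemStr Fn' VF'}
variable (D : MapData Fn VF Fn' VF' W SM SN)

lemma hW_addR (U V Z : W) : D.hW U (V + Z) = D.hW U V + D.hW U Z := by
  rw [D.hW_symm, D.hW_addL, D.hW_symm V U, D.hW_symm Z U]

lemma hW_smulR (f : Fn) (U V : W) : D.hW U (f • V) = f * D.hW U V := by
  rw [D.hW_symm, D.hW_smulL, D.hW_symm V U]

lemma hW_zeroR (U : W) : D.hW U 0 = 0 := by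
  have h := D.hW_addR U 0 0
  rw [add_zero] at h
  exact (left_eq_add.mp h)

lemma hW_subR (U V Z : W) : D.hW U (V - Z) = D.hW U V - D.hW U Z := by
  have h := D.hW_addR U (V - Z) Z
  rw [sub_add_cancel] at h
  exact eq_sub_of_add_eq h.symm

lemma hW_negR (U V : W) : D.hW U (-V) = -D.hW U V := by
  have h := D.hW_subR U 0 V
  rw [zero_sub, D.hW_zeroR, zero_sub] at h
  exact h

lemma pconn_zeroR (X : VF) : D.pconn X 0 = 0 := by
  have h := D.pconn_addR X 0 0
  rw [add_zero] at h
  exact (left_eq_add.mp h)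

end MapData

namespace SasakiAlong

variable {Fn VF Fn' VF' W : Type} [CommRing Fn] [Algebra ℝ Fn]
  [AddCommGroup VF] [Module Fn VF] [CommRing Fn'] [Algebra ℝ Fn']
  [AddCommGroup VF'] [Module Fn' VF'] [AddCommGroup W] [Module Fn W]
  {SM : RiemStr Fn VF} {SN : RiemStr Fn' VF'}
  {D : MapData Fn VF Fn' VF' W SM SN} {SS : SasakiStr Fn' VF' SN}
variable (SA : SasakiAlong Fn VF Fn' VF' W D SS)

/-- `J(∇̄_X ξ) = dφ X` for a Legendrian map. -/
lemma Jw_pconn_xi (hLeg : SA.IsLegendrian) (X : VF) :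
    SA.Jw (D.pconn X (D.pullV SS.xi)) = D.dmap X := by
  have h := SA.Jw_parallel X (D.pullV SS.xi)
  rw [SA.Jw_pull, SS.J_xi, map_zero, D.pconn_zeroR, zero_sub,
      SA.etaW_pull, SS.eta_xi, map_one, one_smul] at h
  have hx : D.hW (D.dmap X) (D.pullV SS.xi) = 0 := by
    rw [← SA.etaW_eq_hW]; exact hLeg X
  rw [hx, zero_smul, zero_sub, neg_inj] at h
  exact h

lemma hW_Jw_self (U : W) : D.hW U (SA.Jw U) = 0 := by
  have h1 := SA.hW_Jw U (SA.Jw U)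
  rw [SA.etaW_Jw, mul_zero, sub_zero, SA.Jw_sq, D.hW_addR, D.hW_negR, D.hW_smulR] at h1
  have h2 : D.hW (SA.Jw U) (D.pullV SS.xi) = 0 := by
    rw [← SA.etaW_eq_hW]; exact SA.etaW_Jw U
  rw [h2, mul_zero, add_zero] at h1
  -- h1 : -(hW (Jw U) U) = hW U (Jw U)
  apply half_cancel
  rw [D.hW_symm U (SA.Jw U)] at h1 ⊢
  linear_combination -h1

lemma etaW_pconn_dmap (hLeg : SA.IsLegendrian) (X : VF) :
    SA.etaW (D.pconn X (D.dmap X)) = 0 := by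
  have hc := D.hW_compat X (D.dmap X) (D.pullV SS.xi)
  have hx : D.hW (D.dmap X) (D.pullV SS.xi) = 0 := by
    rw [← SA.etaW_eq_hW]; exact hLeg X
  rw [hx, SM.deriv_zero] at hc
  -- compute hW (dmap X) (pconn X pullξ)
  have hP : D.pconn X (D.pullV SS.xi)
      = SA.etaW (D.pconn X (D.pullV SS.xi)) • D.pullV SS.xi - SA.Jw (D.dmap X) := by
    have h := SA.Jw_sq (D.pconn X (D.pullV SS.xi))
    rw [SA.Jw_pconn_xi hLeg] at h
    rw [h]; abel
  have h2 : D.hW (D.dmap X) (D.pconn X (D.pullV SS.xi)) = 0 := by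
    rw [hP, D.hW_subR, D.hW_smulR, hx, mul_zero, SA.hW_Jw_self, zero_sub, neg_zero]
  rw [h2, add_zero] at hc
  rw [SA.etaW_eq_hW]
  exact hc.symm

lemma etaW_tension (hLeg : SA.IsLegendrian) {m : ℕ} (e : Fin m → VF) :
    SA.etaW (D.tension e) = 0 := by
  rw [MapData.tension, map_sum]
  apply Finset.sum_eq_zero
  intro i _
  rw [MapData.sff, map_sub, SA.etaW_pconn_dmap hLeg, hLeg (SM.conn (e i) (e i)), sub_zero]

end SasakiAlong
namespace ConeMapData

variable {Fn VF Fn' VF' W FnC VFC Wc : Type} [CommRing Fn] [Algebra ℝ Fn]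
  [AddCommGroup VF] [Module Fn VF] [CommRing Fn'] [Algebra ℝ Fn']
  [AddCommGroup VF'] [Module Fn' VF'] [AddCommGroup W] [Module Fn W]
  [CommRing FnC] [Algebra ℝ FnC] [AddCommGroup VFC] [Module FnC VFC]
  [AddCommGroup Wc] [Module FnC Wc]
  {SM : RiemStr Fn VF} {SN : RiemStr Fn' VF'} {SC : RiemStr FnC VFC}
  {D : MapData Fn VF Fn' VF' W SM SN} {CM : ConeData Fn VF FnC VFC SM SC}
variable (C : ConeMapData Fn VF Fn' VF' W FnC VFC Wc SM SN SC D CM)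

lemma tensionC_eq {m : ℕ} (e : Fin m → VF) (he : SM.IsONFrame e) :
    C.tensionC e = (CM.rinv * CM.rinv) • C.emb (D.tension e)
      + ((m : FnC) * CM.rinv) • C.drsec := by
  have hr : CM.rinv * (CM.rinv * CM.rr) = CM.rinv := by
    rw [CM.rinv_rr, mul_one]
  have key : ∀ i : Fin m,
      C.pconnC (CM.coneFrame e i) (C.dmapC (CM.coneFrame e i))
        - C.dmapC (SC.conn (CM.coneFrame e i) (CM.coneFrame e i))
      = (CM.rinv * CM.rinv) • C.emb (D.sff (e i) (e i)) + CM.rinv • C.drsec := by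
    intro i
    simp only [ConeData.coneFrame]
    rw [C.dmapC_smul, C.dmapC_lift, C.pconnC_smulL, C.pconnC_leibniz,
        CM.deriv_liftV_rinv, zero_smul, zero_add, C.pconnC_lift_emb,
        SC.conn_smulL, SC.conn_leibniz, CM.deriv_liftV_rinv, zero_smul, zero_add,
        CM.conn_lift_lift, he i i, if_pos rfl, map_one, mul_one,
        C.dmapC_smul, C.dmapC_smul, map_sub, C.dmapC_lift, C.dmapC_smul, C.dmapC_dr,
        MapData.sff, map_sub]
    simp only [smul_sub, smul_smul]
    rw [hr]
    abel
  rw [ConeMapData.tensionC]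
  simp only [key]
  rw [C.dmapC_dr, C.pconnC_dr_dr, CM.conn_dr_dr, map_zero, sub_zero, add_zero,
      Finset.sum_add_distrib, ← Finset.smul_sum, ← map_sum, Finset.sum_const,
      Finset.card_univ, Fintype.card_fin,
      ← Nat.cast_smul_eq_nsmul FnC m (CM.rinv • C.drsec), smul_smul]
  simp only [MapData.tension]

end ConeMapData
namespace ConeImmersionData

variable {Fn VF Fn' VF' W FnC VFC Wc : Type} [CommRing Fn] [Algebra ℝ Fn]
  [AddCommGroup VF] [Module Fn VF] [CommRing Fn'] [Algebra ℝ Fn']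
  [AddCommGroup VF'] [Module Fn' VF'] [AddCommGroup W] [Module Fn W]
  [CommRing FnC] [Algebra ℝ FnC] [AddCommGroup VFC] [Module FnC VFC]
  [AddCommGroup Wc] [Module FnC Wc]
  {SM : RiemStr Fn VF} {SN : RiemStr Fn' VF'} {SC : RiemStr FnC VFC}
  {CM : ConeData Fn VF FnC VFC SM SC}

lemma tanPrC_emb (DI : ImmersionData Fn VF Fn' VF' W SM SN)
    (C : ConeImmersionData Fn VF Fn' VF' W FnC VFC Wc SM SN SC DI.toMapData CM)
    (V : W) : C.tanPrC (C.emb V) = CM.liftV (DI.tanPr V) := by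
  apply CM.eq_of_g
  · intro Z
    rw [C.tanPrC_char, C.dmapC_lift, C.hWc_emb, CM.metric_lift, DI.tanPr_char]
  · rw [C.tanPrC_char, C.dmapC_dr, C.hWc_emb_dr, CM.g_lift_dr]

end ConeImmersionData

namespace ConeData

variable {Fn VF FnC VFC : Type} [CommRing Fn] [Algebra ℝ Fn]
  [AddCommGroup VF] [Module Fn VF] [CommRing FnC] [Algebra ℝ FnC]
  [AddCommGroup VFC] [Module FnC VFC]
  {SM : RiemStr Fn VF} {SC : RiemStr FnC VFC}
variable (CM : ConeData Fn VF FnC VFC SM SC)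

lemma coneDiv_add {m : ℕ} (e : Fin m → VF) (Z Z' : VFC) :
    CM.coneDiv e (Z + Z') = CM.coneDiv e Z + CM.coneDiv e Z' := by
  simp only [ConeData.coneDiv, SC.conn_addR, SC.g_addR, Finset.sum_add_distrib]
  ring

lemma deriv_liftV_rinv2 (X : VF) :
    SC.deriv (CM.liftV X) (CM.rinv * CM.rinv) = 0 := by
  rw [SC.deriv_mul, CM.deriv_liftV_rinv, zero_mul, mul_zero, add_zero]

lemma coneDiv_rinv2_lift {m : ℕ} (e : Fin m → VF) (A : VF) :
    CM.coneDiv e ((CM.rinv * CM.rinv) • CM.liftV A)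
      = (CM.rinv * CM.rinv) * CM.lift (SM.divergence e A) := by
  have hterm : ∀ i : Fin m,
      SC.g (CM.coneFrame e i) (SC.conn (CM.coneFrame e i) ((CM.rinv * CM.rinv) • CM.liftV A))
        = (CM.rinv * CM.rinv) * CM.lift (SM.g (e i) (SM.conn (e i) A)) := by
    intro i
    simp only [ConeData.coneFrame]
    rw [SC.conn_smulL, SC.conn_leibniz, CM.deriv_liftV_rinv2, zero_smul, zero_add,
        CM.conn_lift_lift, SC.g_smulL, SC.g_smulR, SC.g_smulR, SC.g_subR, SC.g_smulR,
        CM.metric_lift, CM.g_lift_dr, mul_zero, sub_zero]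
    linear_combination (CM.rinv * CM.rinv * CM.lift (SM.g (e i) (SM.conn (e i) A))
      * (CM.rr * CM.rinv + 1)) * CM.rr_rinv
  have hdr : SC.g CM.dr (SC.conn CM.dr ((CM.rinv * CM.rinv) • CM.liftV A)) = 0 := by
    rw [SC.conn_leibniz, SC.g_addR, SC.g_smulR, CM.metric_dr_lift, mul_zero,
        CM.conn_dr_lift, SC.g_smulR, SC.g_smulR, CM.metric_dr_lift, mul_zero, mul_zero,
        add_zero]
  rw [ConeData.coneDiv, hdr, add_zero]
  simp only [hterm]
  rw [← Finset.mul_sum, ← map_sum]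
  rfl

lemma coneDiv_perp {m : ℕ} (e : Fin m → VF) (c : FnC) (B : VF)
    (hB : ∀ X : VF, SM.g B X = 0) :
    CM.coneDiv e (c • CM.liftV B) = 0 := by
  have hgB : ∀ X : VF, SM.g X B = 0 := fun X => by rw [SM.g_symm]; exact hB X
  have hgc : ∀ X : VF, SM.g X (SM.conn X B) = 0 := by
    intro X
    have h := SM.metric_compat X X B
    rw [hgB X, SM.deriv_zero, hgB (SM.conn X X), zero_add] at h
    exact h.symm
  have hterm : ∀ i : Fin m,
      SC.g (CM.coneFrame e i) (SC.conn (CM.coneFrame e i) (c • CM.liftV B)) = 0 := by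
    intro i
    simp only [ConeData.coneFrame]
    rw [SC.conn_smulL, SC.conn_leibniz, CM.conn_lift_lift, hgB (e i), map_zero,
        mul_zero, zero_smul, sub_zero, SC.g_smulL, SC.g_smulR, SC.g_addR, SC.g_smulR,
        CM.metric_lift, hgB (e i), map_zero, mul_zero, SC.g_smulR, CM.metric_lift,
        hgc (e i), map_zero]
    ring
  have hdr : SC.g CM.dr (SC.conn CM.dr (c • CM.liftV B)) = 0 := by
    rw [SC.conn_leibniz, SC.g_addR, SC.g_smulR, CM.metric_dr_lift, mul_zero,
        CM.conn_dr_lift, SC.g_smulR, SC.g_smulR, CM.metric_dr_lift, mul_zero, mul_zero,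
        add_zero]
  rw [ConeData.coneDiv, hdr, add_zero]
  simp only [hterm, Finset.sum_const_zero]

end ConeData
/-- **Theorem 3.3 (4).**  Let `φ : (M^m,g) → (N^{2m+1},h,J,ξ,η)` be a
Legendrian isometric immersion into a Sasakian manifold and
`φ̄ : (C(M),ḡ) → (C(N),h̄,I)` the corresponding Lagrangian cone immersion.  Then
`div_{ḡ}(I τ(φ̄)) = (1/r²) div_g(J τ(φ))`.  Consequently `φ` is Legendrian minimal
(`div_g(J τ(φ)) = 0`) iff `φ̄` is Lagrangian minimal (`div_{ḡ}(I τ(φ̄)) = 0`). -/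
theorem legendrian_minimal_iff_lagrangian_minimal
    {Fn VF Fn' VF' W FnC VFC Wc : Type}
    [CommRing Fn] [Algebra ℝ Fn] [AddCommGroup VF] [Module Fn VF]
    [CommRing Fn'] [Algebra ℝ Fn'] [AddCommGroup VF'] [Module Fn' VF']
    [AddCommGroup W] [Module Fn W]
    [CommRing FnC] [Algebra ℝ FnC] [AddCommGroup VFC] [Module FnC VFC]
    [AddCommGroup Wc] [Module FnC Wc]
    (SM : RiemStr Fn VF) (SN : RiemStr Fn' VF') (SC : RiemStr FnC VFC)
    (SS : SasakiStr Fn' VF' SN)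
    (D : ImmersionData Fn VF Fn' VF' W SM SN)
    (SA : SasakiAlong Fn VF Fn' VF' W D.toMapData SS)
    {m : ℕ} (hm : 0 < m) (e : Fin m → VF) (he : SM.IsONFrame e)
    (eN : Fin (2 * m + 1) → VF') (heN : SN.IsONFrame eN)
    (hLeg : SA.IsLegendrian)
    (CM : ConeData Fn VF FnC VFC SM SC)
    (C : ConeImmersionData Fn VF Fn' VF' W FnC VFC Wc SM SN SC D.toMapData CM)
    (K : KaehlerConeAlong Fn VF Fn' VF' W FnC VFC Wc C.toConeMapData SS SA) :
    CM.coneDiv e (C.tanPrC (K.Iw (C.toConeMapData.tensionC e)))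
      = (CM.rinv * CM.rinv) *
          CM.lift (SM.divergence e (D.tanPr (SA.Jw (D.toMapData.tension e))))
      ∧ (SM.divergence e (D.tanPr (SA.Jw (D.toMapData.tension e))) = 0
          ↔ CM.coneDiv e (C.tanPrC (K.Iw (C.toConeMapData.tensionC e))) = 0) := by
  have hτ0 : SA.etaW (D.toMapData.tension e) = 0 := SA.etaW_tension hLeg e
  have hB : ∀ X : VF, SM.g (D.tanPr (D.toMapData.pullV SS.xi)) X = 0 := by
    intro X
    rw [D.tanPr_char, D.toMapData.hW_symm, ← SA.etaW_eq_hW]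
    exact hLeg X
  have ht := C.toConeMapData.tensionC_eq e he
  have hIw : K.Iw (C.toConeMapData.tensionC e)
      = (CM.rinv * CM.rinv) • C.emb (SA.Jw (D.toMapData.tension e))
        + (-(((m : FnC) * CM.rinv) * CM.rinv)) • C.emb (D.toMapData.pullV SS.xi) := by
    rw [ht, map_add, K.Iw_smul, K.Iw_smul, K.Iw_emb, hτ0, map_zero, mul_zero,
        zero_smul, add_zero, K.Iw_dr, smul_neg, smul_smul, ← neg_smul]
  have hZ : C.tanPrC (K.Iw (C.toConeMapData.tensionC e))
      = (CM.rinv * CM.rinv) • CM.liftV (D.tanPr (SA.Jw (D.toMapData.tension e)))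
        + (-(((m : FnC) * CM.rinv) * CM.rinv))
            • CM.liftV (D.tanPr (D.toMapData.pullV SS.xi)) := by
    rw [hIw, map_add, C.tanPrC_smul, C.tanPrC_smul,
        ConeImmersionData.tanPrC_emb D C, ConeImmersionData.tanPrC_emb D C]
  have hmain : CM.coneDiv e (C.tanPrC (K.Iw (C.toConeMapData.tensionC e)))
      = (CM.rinv * CM.rinv)
          * CM.lift (SM.divergence e (D.tanPr (SA.Jw (D.toMapData.tension e)))) := by
    rw [hZ, CM.coneDiv_add, CM.coneDiv_rinv2_lift, CM.coneDiv_perp e _ _ hB, add_zero]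
  refine ⟨hmain, ?_, ?_⟩
  · intro h0; rw [hmain, h0, map_zero, mul_zero]
  · intro h0
    rw [hmain] at h0
    apply CM.lift_inj
    rw [map_zero]
    calc CM.lift (SM.divergence e (D.tanPr (SA.Jw (D.toMapData.tension e))))
        = (CM.rr * CM.rr) * ((CM.rinv * CM.rinv)
            * CM.lift (SM.divergence e (D.tanPr (SA.Jw (D.toMapData.tension e))))) := by
          linear_combination (-(CM.lift (SM.divergence e (D.tanPr (SA.Jw (D.toMapData.tension e)))))
            * (CM.rr * CM.rinv + 1)) * CM.rr_rinv
      _ = 0 := by rw [h0, mul_zero]
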